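/- Pointwise limit as \(L\to\infty\): for every \((x,\rho)\) with \(\rho>0\) (or \(\rho=0\), \(|x|>M\)), the periodic Ernst potential \({\cal E}_L(x,\rho)={\cal E}_0(x,\rho)\prod_{n\ge1}{\cal E}_0(x+nL,\rho){\cal E}_0(x-nL,\rho)e^{4M/(nL)}\) converges to the Schwarzschild Ernst potential \({\cal E}_0(x,\rho)\) as \(L\to\infty\). -/

import Mathlib

/-! At a point `(y, ρ)` write `p = s₁ + s₂`, so that `ernst0 M y ρ = (p - 2M)/(p + 2M)` with
`2|y| ≤ p ≤ 2(|y| + M + |ρ|)`. Hence `log ernst0 M y ρ = -2M/|y| + O(1/|y|²)`, and the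
normalising factor `exp (4M/t)` cancels the leading terms of `log ernst0 M (x ± t) ρ`: the
logarithm of the `n`-th factor of the product is `O(1/((n+1)L)²)`. Summing over `n`, the
logarithm of the infinite product is `O(1/L²)`, so the product tends to `1`. -/

noncomputable def ernst0 (M x ρ : ℝ) : ℝ :=
  (Real.sqrt ((x - M) ^ 2 + ρ ^ 2) + Real.sqrt ((x + M) ^ 2 + ρ ^ 2) - 2 * M) /
  (Real.sqrt ((x - M) ^ 2 + ρ ^ 2) + Real.sqrt ((x + M) ^ 2 + ρ ^ 2) + 2 * M)

noncomputable def ernstPeriodic (M L x ρ : ℝ) : ℝ :=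
  ernst0 M x ρ * ∏' n : ℕ,
    (ernst0 M (x + (n + 1) * L) ρ * ernst0 M (x - (n + 1) * L) ρ *
      Real.exp (4 * M / ((n + 1) * L)))

open Real Filter Topology

theorem tendsto_tprod_nhds_one_of_abs_log_le {α β : Type*} {l : Filter α} {F : α → β → ℝ}
    {ε : α → ℝ} {a : β → ℝ} (ha : Summable a) (hε : Tendsto ε l (𝓝 0))
    (hF : ∀ᶠ i in l, ∀ n, 0 < F i n ∧ |log (F i n)| ≤ ε i * a n) :
    Tendsto (fun i ↦ ∏' n, F i n) l (𝓝 1) := by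
  have hlog : Tendsto (fun i ↦ ∑' n, log (F i n)) l (𝓝 0) := by
    refine squeeze_zero_norm' ?_ (by simpa using hε.mul_const (∑' n, a n))
    filter_upwards [hF] with i hi
    rw [← tsum_mul_left]
    exact tsum_of_norm_bounded (ha.mul_left (ε i)).hasSum fun n ↦ (hi n).2
  refine (exp_zero ▸ hlog.rexp).congr' ?_
  filter_upwards [hF] with i hi
  exact rexp_tsum_eq_tprod (fun n ↦ (hi n).1)
    (.of_norm_bounded (ha.mul_left (ε i)) fun n ↦ (hi n).2)

theorem neg_two_mul_div_le_log_sub_div_add {a p : ℝ} (hap : a < p) (ha : 0 ≤ a) :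
    -(2 * a / (p - a)) ≤ log ((p - a) / (p + a)) := by
  have hpos : 0 < (p - a) / (p + a) := div_pos (by linarith) (by linarith)
  have key : 1 - ((p - a) / (p + a))⁻¹ = -(2 * a / (p - a)) := by
    field_simp [show p - a ≠ 0 by linarith]; ring
  exact key ▸ one_sub_inv_le_log_of_pos hpos

theorem log_sub_div_add_le {a p : ℝ} (hap : a < p) (ha : 0 ≤ a) :
    log ((p - a) / (p + a)) ≤ -(2 * a / (p + a)) := by
  have hpos : 0 < (p - a) / (p + a) := div_pos (by linarith) (by linarith)
  have key : (p - a) / (p + a) - 1 = -(2 * a / (p + a)) := by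
    field_simp [show p + a ≠ 0 by linarith]; ring
  exact key ▸ log_le_sub_one_of_pos hpos

theorem two_mul_abs_le_sqrt_add_sqrt (M y ρ : ℝ) :
    2 * |y| ≤ √((y - M) ^ 2 + ρ ^ 2) + √((y + M) ^ 2 + ρ ^ 2) := by
  have h₁ : |y - M| ≤ √((y - M) ^ 2 + ρ ^ 2) := abs_le_sqrt (by nlinarith [sq_nonneg ρ])
  have h₂ : |y + M| ≤ √((y + M) ^ 2 + ρ ^ 2) := abs_le_sqrt (by nlinarith [sq_nonneg ρ])
  have h₃ : |(y - M) + (y + M)| ≤ |y - M| + |y + M| := abs_add_le _ _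
  rw [show (y - M) + (y + M) = 2 * y by ring, abs_mul, abs_two] at h₃
  linarith

theorem sqrt_sq_add_sq_le_abs_add_abs (a ρ : ℝ) : √(a ^ 2 + ρ ^ 2) ≤ |a| + |ρ| :=
  sqrt_le_iff.mpr ⟨by positivity, by
    nlinarith [sq_abs a, sq_abs ρ, mul_nonneg (abs_nonneg a) (abs_nonneg ρ)]⟩

theorem sqrt_add_sqrt_le (M y ρ : ℝ) (hM : 0 ≤ M) :
    √((y - M) ^ 2 + ρ ^ 2) + √((y + M) ^ 2 + ρ ^ 2) ≤ 2 * (|y| + M + |ρ|) := by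
  have h₁ := sqrt_sq_add_sq_le_abs_add_abs (y - M) ρ
  have h₂ := sqrt_sq_add_sq_le_abs_add_abs (y + M) ρ
  have h₃ : |y - M| ≤ |y| + M := (abs_sub _ _).trans_eq (by rw [abs_of_nonneg hM])
  have h₄ : |y + M| ≤ |y| + M := (abs_add_le _ _).trans_eq (by rw [abs_of_nonneg hM])
  linarith

section Ernst

variable {M : ℝ} (hM : 0 < M) {y ρ : ℝ} (hy : M < |y|)
include hM hy

theorem ernst0_pos : 0 < ernst0 M y ρ := by
  have := two_mul_abs_le_sqrt_add_sqrt M y ρ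
  exact div_pos (by linarith) (by linarith)

theorem neg_div_le_log_ernst0 : -(2 * M / (|y| - M)) ≤ log (ernst0 M y ρ) := by
  have hp := two_mul_abs_le_sqrt_add_sqrt M y ρ
  refine le_trans ?_ (neg_two_mul_div_le_log_sub_div_add (by linarith) (by linarith))
  rw [neg_le_neg_iff, show 2 * M / (|y| - M) = 2 * (2 * M) / (2 * |y| - 2 * M) by
    field_simp [show |y| - M ≠ 0 by linarith]]
  gcongr; linarith

theorem log_ernst0_le : log (ernst0 M y ρ) ≤ -(2 * M / (|y| + 2 * M + |ρ|)) := by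
  have hp := two_mul_abs_le_sqrt_add_sqrt M y ρ
  have hp' := sqrt_add_sqrt_le M y ρ hM.le
  refine (log_sub_div_add_le (by linarith) (by linarith)).trans ?_
  rw [neg_le_neg_iff,
    show 2 * M / (|y| + 2 * M + |ρ|) = 2 * (2 * M) / (2 * (|y| + M + |ρ|) + 2 * M) by
      field_simp; ring]
  gcongr

end Ernst

theorem ernst0_pos_and_log_mem_Icc {M ρ r t y : ℝ} (hM : 0 < M) (hy : |(|y| - t)| ≤ r)
    (ht : r + 2 * M + |ρ| < t) :
    0 < ernst0 M y ρ ∧ log (ernst0 M y ρ) ∈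
      Set.Icc (-(2 * M / (t - (r + 2 * M + |ρ|)))) (-(2 * M / (t + (r + 2 * M + |ρ|)))) := by
  obtain ⟨hy₁, hy₂⟩ := abs_le.mp hy
  have hyM : M < |y| := by linarith [abs_nonneg ρ]
  refine ⟨ernst0_pos hM hyM, (neg_div_le_log_ernst0 hM hyM).trans' ?_,
    (log_ernst0_le hM hyM).trans ?_⟩
  · exact neg_le_neg (div_le_div_of_nonneg_left (by positivity) (by linarith)
      (by linarith [abs_nonneg ρ]))
  · exact neg_le_neg (div_le_div_of_nonneg_left (by positivity) (by positivity) (by linarith))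

noncomputable def ernstFactor (M x ρ t : ℝ) : ℝ :=
  ernst0 M (x + t) ρ * ernst0 M (x - t) ρ * exp (4 * M / t)

theorem ernstFactor_pos_and_abs_log_le {M : ℝ} (hM : 0 < M) (x ρ : ℝ) {t : ℝ}
    (ht : 2 * (|x| + 2 * M + |ρ|) ≤ t) :
    0 < ernstFactor M x ρ t ∧
      |log (ernstFactor M x ρ t)| ≤ 8 * M * (|x| + 2 * M + |ρ|) / t ^ 2 := by
  set B := |x| + 2 * M + |ρ| with hB
  have hB0 : 0 < B := by positivity
  have ht0 : 0 < t := by linarith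
  have hplus : |(|x + t| - t)| ≤ |x| := by
    simpa [abs_of_pos ht0] using abs_abs_sub_abs_le_abs_sub (x + t) t
  have hminus : |(|x - t| - t)| ≤ |x| := by
    simpa [abs_of_pos ht0] using abs_abs_sub_abs_le_abs_sub (x - t) (-t)
  obtain ⟨hpos₁, hlo₁, hhi₁⟩ := ernst0_pos_and_log_mem_Icc (ρ := ρ) hM hplus (by linarith)
  obtain ⟨hpos₂, hlo₂, hhi₂⟩ := ernst0_pos_and_log_mem_Icc (ρ := ρ) hM hminus (by linarith)
  rw [← hB] at hlo₁ hhi₁ hlo₂ hhi₂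
  have hlog : log (ernstFactor M x ρ t) =
      log (ernst0 M (x + t) ρ) + log (ernst0 M (x - t) ρ) + 4 * M / t := by
    rw [ernstFactor, log_mul (by positivity) (exp_pos _).ne', log_mul hpos₁.ne' hpos₂.ne',
      log_exp]
  refine ⟨by unfold ernstFactor; positivity, ?_⟩
  have hlo : 4 * M / t - 2 * (2 * M / (t - B)) = -(4 * M * B / (t * (t - B))) := by
    field_simp [show t - B ≠ 0 by linarith]; ring
  have hhi : 4 * M / t - 2 * (2 * M / (t + B)) = 4 * M * B / (t * (t + B)) := by
    field_simp; ring
  have hmid : 4 * M * B / (t * (t + B)) ≤ 4 * M * B / (t * (t - B)) := by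
    gcongr
    · nlinarith
    · linarith
  have hend : 4 * M * B / (t * (t - B)) ≤ 8 * M * B / t ^ 2 := by
    rw [div_le_div_iff₀ (by nlinarith) (by positivity)]
    nlinarith [mul_nonneg (mul_pos (mul_pos hM hB0) ht0).le (by linarith : 0 ≤ t - 2 * B)]
  rw [hlog, abs_le]
  constructor <;> linarith

theorem tendsto_tprod_ernstFactor {M : ℝ} (hM : 0 < M) (x ρ : ℝ) :
    Tendsto (fun L ↦ ∏' n : ℕ, ernstFactor M x ρ ((n + 1) * L)) atTop (𝓝 1) := by
  set B := |x| + 2 * M + |ρ| with hB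
  have hB0 : 0 ≤ B := by positivity
  refine tendsto_tprod_nhds_one_of_abs_log_le (ε := fun L ↦ 8 * M * B / L ^ 2)
    (a := fun n : ℕ ↦ 1 / ((n : ℝ) + 1) ^ 2) ?_ ?_ ?_
  · simpa using (summable_nat_add_iff 1).mpr (summable_one_div_nat_pow.mpr one_lt_two)
  · exact tendsto_const_nhds.div_atTop (tendsto_pow_atTop two_ne_zero)
  · filter_upwards [eventually_ge_atTop (2 * B)] with L hL n
    have hn : 2 * B ≤ (n + 1) * L :=
      hL.trans (le_mul_of_one_le_left (by linarith) (by simp))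
    obtain ⟨hpos, hlog⟩ := ernstFactor_pos_and_abs_log_le hM x ρ hn
    refine ⟨hpos, hlog.trans_eq ?_⟩
    simp only [hB]
    field_simp

theorem ernstPeriodic_tendsto_schwarzschild_general (M : ℝ) (hM : 0 < M) (x ρ : ℝ) :
    Filter.Tendsto (fun L : ℝ => ernstPeriodic M L x ρ) Filter.atTop
      (nhds (ernst0 M x ρ)) := by
  have h := (tendsto_tprod_ernstFactor hM x ρ).const_mul (ernst0 M x ρ)
  rw [mul_one] at h
  exact h

/-- In the limit `L → ∞` the periodic Ernst potential converges pointwise to the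
ordinary Schwarzschild Ernst potential (at every point with `ρ > 0`, or on the axis
outside the horizon). -/
theorem ernstPeriodic_tendsto_schwarzschild (M : ℝ) (hM : 0 < M) (x ρ : ℝ)
    (h : 0 < ρ ∨ (ρ = 0 ∧ M < |x|)) :
    Filter.Tendsto (fun L : ℝ => ernstPeriodic M L x ρ) Filter.atTop
      (nhds (ernst0 M x ρ)) :=
  ernstPeriodic_tendsto_schwarzschild_general M hM x ρ
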